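/- arXiv:2303.17982 — 2 statements merged into one kernel-verified Lean document; each statement's English description precedes it below -/
import Mathlib

section
/- Efficiency under saturation: assume consistency b_h(u,ν) = ℓ(ν) for ν ∈ V_h, and the saturation assumption |||u − θ_h||| ≤ C_s |||u − u_h||| with C_s ∈ [0,1), where θ_h is the Galerkin solution in V_h and u_h the residual-minimization solution in U_h ⊂ V_h. Then |||ε_h||| ≲ |||u − u_h|||, with hidden constant depending only on C_s and the coercivity/continuity constants relating |||·||| to the V_h inner product. -/
/-!
Testing the first saddle-point equation with `ε_h` and subtracting the Galerkin equation gives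
`‖ε_h‖² = b_h(θ_h − u_h, ε_h)`, so continuity of `b_h` and the norm equivalence on `V_h` yield
`‖ε_h‖ ≤ c₂ M |||θ_h − u_h|||`. The triangle inequality through `u` and the saturation assumption
then bound `|||θ_h − u_h|||` by `(1 + C_s) |||u − u_h|||`.
-/

open scoped RealInnerProductSpace

lemma apply_sub_le_apply_sub_add_apply_sub {G : Type*} [AddCommGroup G] {N : G → ℝ}
    (hNtri : ∀ x y : G, N (x + y) ≤ N x + N y) (hNsym : ∀ x : G, N (-x) = N x) (x y z : G) :
    N (x - y) ≤ N (z - x) + N (z - y) := by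
  calc N (x - y) = N (-(z - x) + (z - y)) := by congr 1; abel
    _ ≤ N (-(z - x)) + N (z - y) := hNtri _ _
    _ = N (z - x) + N (z - y) := by rw [hNsym]

section Residual

variable {W : Type*} [NormedAddCommGroup W] [InnerProductSpace ℝ W]

lemma norm_le_of_inner_self_le_mul_norm {ε : W} {a : ℝ} (ha : 0 ≤ a)
    (h : ⟪ε, ε⟫ ≤ a * ‖ε‖) : ‖ε‖ ≤ a := by
  rw [real_inner_self_eq_norm_sq] at h
  rcases (norm_nonneg ε).eq_or_lt with hε | hε
  · rwa [← hε]
  · nlinarith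

variable {V : Submodule ℝ W} {b : W →ₗ[ℝ] W →ₗ[ℝ] ℝ} {ℓ : W →ₗ[ℝ] ℝ} {θh εh uh : W}

lemma inner_residual_eq_apply_galerkin_sub (hGal : ∀ ν ∈ V, b θh ν = ℓ ν)
    (h1 : ∀ ν ∈ V, ⟪εh, ν⟫ + b uh ν = ℓ ν) {ν : W} (hν : ν ∈ V) :
    ⟪εh, ν⟫ = b (θh - uh) ν := by
  rw [map_sub, LinearMap.sub_apply]
  linarith [hGal ν hν, h1 ν hν]

lemma norm_residual_le_mul_galerkin_sub {N : W → ℝ} {M c₂ : ℝ} (hM : 0 ≤ M) (hc₂ : 0 ≤ c₂)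
    (hN0 : ∀ x : W, 0 ≤ N x) (hbnd : ∀ v ∈ V, ∀ w ∈ V, |b v w| ≤ M * N v * N w)
    (heq : ∀ v ∈ V, N v ≤ c₂ * ‖v‖) (hθ : θh ∈ V) (hε : εh ∈ V) (huh : uh ∈ V)
    (hGal : ∀ ν ∈ V, b θh ν = ℓ ν) (h1 : ∀ ν ∈ V, ⟪εh, ν⟫ + b uh ν = ℓ ν) :
    ‖εh‖ ≤ c₂ * M * N (θh - uh) := by
  have hMN : 0 ≤ M * N (θh - uh) := mul_nonneg hM (hN0 _)
  refine norm_le_of_inner_self_le_mul_norm (by rw [mul_assoc]; exact mul_nonneg hc₂ hMN) ?_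
  calc ⟪εh, εh⟫ = b (θh - uh) εh := inner_residual_eq_apply_galerkin_sub hGal h1 hε
    _ ≤ M * N (θh - uh) * N εh := le_of_abs_le (hbnd _ (V.sub_mem hθ huh) _ hε)
    _ ≤ M * N (θh - uh) * (c₂ * ‖εh‖) := mul_le_mul_of_nonneg_left (heq _ hε) hMN
    _ = c₂ * M * N (θh - uh) * ‖εh‖ := by ring

end Residual

theorem stmt_8_general {W : Type*} [NormedAddCommGroup W] [InnerProductSpace ℝ W]
    (V U : Submodule ℝ W) (hUV : U ≤ V)
    (b : W →ₗ[ℝ] W →ₗ[ℝ] ℝ) (ℓ : W →ₗ[ℝ] ℝ)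
    (N : W → ℝ) (M c₂ Cs : ℝ) (hM : 0 < M) (hc₂ : 0 < c₂)
    -- seminorm properties of |||·|||
    (hN0 : ∀ x : W, 0 ≤ N x)
    (hNtri : ∀ x y : W, N (x + y) ≤ N x + N y)
    (hNsym : ∀ x : W, N (-x) = N x)
    -- continuity of b_h on V_h w.r.t. |||·|||
    (hbnd : ∀ v ∈ V, ∀ w ∈ V, |b v w| ≤ M * N v * N w)
    -- norm equivalence on V_h
    (heq : ∀ v ∈ V, N v ≤ c₂ * ‖v‖)
    (u θh εh uh : W)
    (hθ : θh ∈ V) (hε : εh ∈ V) (huh : uh ∈ U)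
    -- Galerkin solution θ_h
    (hGal : ∀ ν ∈ V, b θh ν = ℓ ν)
    -- saddle-point system: residual representative ε_h
    (h1 : ∀ ν ∈ V, ⟪εh, ν⟫ + b uh ν = ℓ ν)
    -- saturation assumption
    (hsat : N (u - θh) ≤ Cs * N (u - uh)) :
    N εh ≤ c₂^2 * M * (1 + Cs) * N (u - uh) := by
  have hgap : N (θh - uh) ≤ (1 + Cs) * N (u - uh) := by
    linarith [apply_sub_le_apply_sub_add_apply_sub hNtri hNsym θh uh u]
  have hres : ‖εh‖ ≤ c₂ * M * N (θh - uh) :=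
    norm_residual_le_mul_galerkin_sub hM.le hc₂.le hN0 hbnd heq hθ hε (hUV huh) hGal h1
  calc N εh ≤ c₂ * ‖εh‖ := heq _ hε
    _ ≤ c₂ * (c₂ * M * N (θh - uh)) := mul_le_mul_of_nonneg_left hres hc₂.le
    _ = c₂ ^ 2 * M * N (θh - uh) := by ring
    _ ≤ c₂ ^ 2 * M * ((1 + Cs) * N (u - uh)) := by gcongr
    _ = c₂ ^ 2 * M * (1 + Cs) * N (u - uh) := by ring

/-- Efficiency under saturation. Assume consistency
`b_h(u,·) = ℓ` on `V_h` and the saturation assumption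
`|||u − θ_h||| ≤ C_s |||u − u_h|||` with `C_s ∈ [0,1)`, where `θ_h` is the
Galerkin solution in `V_h` and `u_h` the residual-minimization solution in
`U_h ⊂ V_h`. Then `|||ε_h||| ≲ |||u − u_h|||`, with constant depending only on
`C_s`, the continuity constant `M` of `b_h` and the norm-equivalence constant
`c₂` relating `|||·||| = N` to the `V_h` inner product norm
(explicitly: `c₂²·M·(1 + C_s)`). -/
theorem stmt_8 {W : Type*} [NormedAddCommGroup W] [InnerProductSpace ℝ W]
    [FiniteDimensional ℝ W]
    (V U : Submodule ℝ W) (hUV : U ≤ V)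
    (b : W →ₗ[ℝ] W →ₗ[ℝ] ℝ) (ℓ : W →ₗ[ℝ] ℝ)
    (N : W → ℝ) (M c₂ Cs : ℝ) (hM : 0 < M) (hc₂ : 0 < c₂)
    (hCs0 : 0 ≤ Cs) (hCs1 : Cs < 1)
    -- seminorm properties of |||·|||
    (hN0 : ∀ x : W, 0 ≤ N x)
    (hNtri : ∀ x y : W, N (x + y) ≤ N x + N y)
    (hNsym : ∀ x : W, N (-x) = N x)
    -- continuity of b_h on V_h w.r.t. |||·|||
    (hbnd : ∀ v ∈ V, ∀ w ∈ V, |b v w| ≤ M * N v * N w)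
    -- norm equivalence on V_h
    (heq : ∀ v ∈ V, N v ≤ c₂ * ‖v‖)
    (u θh εh uh : W)
    (hθ : θh ∈ V) (hε : εh ∈ V) (huh : uh ∈ U)
    -- consistency with the exact solution u
    (hcons : ∀ ν ∈ V, b u ν = ℓ ν)
    -- Galerkin solution θ_h
    (hGal : ∀ ν ∈ V, b θh ν = ℓ ν)
    -- saddle-point system: residual representative ε_h
    (h1 : ∀ ν ∈ V, ⟪εh, ν⟫ + b uh ν = ℓ ν)
    (h2 : ∀ w ∈ U, b w εh = 0)
    -- saturation assumption
    (hsat : N (u - θh) ≤ Cs * N (u - uh)) :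
    N εh ≤ c₂^2 * M * (1 + Cs) * N (u - uh) :=
  stmt_8_general V U hUV b ℓ N M c₂ Cs hM hc₂ hN0 hNtri hNsym hbnd heq u θh εh uh hθ hε huh hGal h1
    hsat
end

section
/- A priori quasi-optimality of residual minimization with continuous test spaces: under coercivity of b_h on V_h w.r.t. |||·|||_{h,k}, consistency b_h(u, ν) = ℓ(ν) for all ν ∈ V_h, and the boundedness assumption b_h(u − Π_h u, v_h) ≲ |||u − Π_h u|||_{h,k,#} |||v_h|||_{h,k} for all v_h ∈ V_h (where Π_h : U → U_h is a continuous operator), the residual-minimization solution u_h satisfies |||u − u_h|||_{h,k} ≲ |||u − Π_h u|||_{h,k,#}. -/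
open scoped RealInnerProductSpace

/-- A priori quasi-optimality of residual minimization with
continuous test spaces. Under coercivity of `b_h` on `V_h` w.r.t. `|||·|||_{h,k} = N`
(constant `c`, with norm-equivalence constants `c₁, c₂` to the inner product
norm on `V_h`), consistency `b_h(u, ν) = ℓ(ν)` for all `ν ∈ V_h`, and the
boundedness assumption `|b_h(u − Π_h u, v_h)| ≤ C_B |||u − Π_h u|||_{h,k,#} |||v_h|||_{h,k}`
for all `v_h ∈ V_h` (with `Π_h u = Pu ∈ U_h` and `|||·|||_{h,k,#} = Ns` a possibly
stronger norm), the residual-minimization solution `u_h` satisfies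
`|||u − u_h|||_{h,k} ≲ |||u − Π_h u|||_{h,k,#}` with explicit constant
`1 + (C_B/c)(1 + c₂/c₁)`. -/
theorem stmt_9 {W : Type*} [NormedAddCommGroup W] [InnerProductSpace ℝ W]
    [FiniteDimensional ℝ W]
    (V U : Submodule ℝ W) (hUV : U ≤ V)
    (b : W →ₗ[ℝ] W →ₗ[ℝ] ℝ) (ℓ : W →ₗ[ℝ] ℝ)
    (N Ns : W → ℝ) (c c₁ c₂ CB : ℝ)
    (hc : 0 < c) (hc₁ : 0 < c₁) (hc₂ : 0 < c₂) (hCB : 0 < CB)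
    -- seminorm properties of |||·|||_{h,k}
    (hN0 : ∀ x : W, 0 ≤ N x)
    (hNtri : ∀ x y : W, N (x + y) ≤ N x + N y)
    (hNsym : ∀ x : W, N (-x) = N x)
    -- coercivity of b_h on V_h
    (hcoer : ∀ v ∈ V, c * (N v)^2 ≤ b v v)
    -- norm equivalence on V_h
    (heq₁ : ∀ v ∈ V, c₁ * ‖v‖ ≤ N v) (heq₂ : ∀ v ∈ V, N v ≤ c₂ * ‖v‖)
    (u Pu εh uh : W)
    (hPu : Pu ∈ U) (hε : εh ∈ V) (huh : uh ∈ U)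
    -- |||·|||_{h,k,#} dominates |||·|||_{h,k} on the projection error
    (hcomp : N (u - Pu) ≤ Ns (u - Pu))
    -- boundedness assumption for the projection error
    (hbdd : ∀ v ∈ V, |b (u - Pu) v| ≤ CB * Ns (u - Pu) * N v)
    -- consistency with the exact solution u
    (hcons : ∀ ν ∈ V, b u ν = ℓ ν)
    -- residual-minimization saddle-point system
    (h1 : ∀ ν ∈ V, ⟪εh, ν⟫ + b uh ν = ℓ ν)
    (h2 : ∀ w ∈ U, b w εh = 0) :
    N (u - uh) ≤ (1 + (CB / c) * (1 + c₂ / c₁)) * Ns (u - Pu) := by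
  have hNs : 0 ≤ Ns (u - Pu) := le_trans (hN0 _) hcomp
  have heU : Pu - uh ∈ U := U.sub_mem hPu huh
  have heV : Pu - uh ∈ V := hUV heU
  have key : ∀ ν ∈ V, b (u - uh) ν = ⟪εh, ν⟫ := by
    intro ν hν
    have ha := h1 ν hν
    have hb' := hcons ν hν
    simp only [map_sub, LinearMap.sub_apply]
    linarith
  have hdecomp : u - uh = (u - Pu) + (Pu - uh) := by abel
  have hsplit : ∀ ν : W, b (u - uh) ν = b (u - Pu) ν + b (Pu - uh) ν := by
    intro ν
    rw [hdecomp, map_add, LinearMap.add_apply]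
  -- bound on ‖εh‖
  have hεbound : b (u - Pu) εh = ⟪εh, εh⟫ := by
    have h0 : b (Pu - uh) εh = 0 := h2 _ heU
    have := key εh hε
    rw [hsplit εh, h0, add_zero] at this
    exact this
  have hεsq : ‖εh‖ ^ 2 ≤ CB * Ns (u - Pu) * (c₂ * ‖εh‖) := by
    have h1' : ⟪εh, εh⟫ ≤ |b (u - Pu) εh| := by
      rw [hεbound]; exact le_abs_self _
    have h2' := hbdd εh hε
    have h3' := heq₂ εh hε
    have h4' : ⟪εh, εh⟫ = ‖εh‖ ^ 2 := real_inner_self_eq_norm_sq εh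
    have h5' : CB * Ns (u - Pu) * N εh ≤ CB * Ns (u - Pu) * (c₂ * ‖εh‖) :=
      mul_le_mul_of_nonneg_left h3' (mul_nonneg hCB.le hNs)
    linarith
  have hεnorm : ‖εh‖ ≤ CB * c₂ * Ns (u - Pu) := by
    rcases eq_or_lt_of_le (norm_nonneg εh) with h | h
    · rw [← h]; positivity
    · have hmul : ‖εh‖ * ‖εh‖ ≤ (CB * c₂ * Ns (u - Pu)) * ‖εh‖ := by nlinarith [hεsq]
      exact (mul_le_mul_iff_of_pos_right h).mp hmul
  -- coercivity step
  have hcoe := hcoer _ heV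
  have hbe : b (Pu - uh) (Pu - uh) = ⟪εh, Pu - uh⟫ - b (u - Pu) (Pu - uh) := by
    have := key (Pu - uh) heV
    rw [hsplit] at this
    linarith
  have hinner : ⟪εh, Pu - uh⟫ ≤ ‖εh‖ * ‖Pu - uh‖ := real_inner_le_norm εh (Pu - uh)
  have hnormle : c₁ * ‖Pu - uh‖ ≤ N (Pu - uh) := heq₁ _ heV
  have habs : -b (u - Pu) (Pu - uh) ≤ CB * Ns (u - Pu) * N (Pu - uh) :=
    le_trans (neg_le_abs _) (hbdd (Pu - uh) heV)
  have step1 : c * N (Pu - uh) ^ 2 ≤ ‖εh‖ * ‖Pu - uh‖ + CB * Ns (u - Pu) * N (Pu - uh) := by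
    linarith
  have hquad : c₁ * c * N (Pu - uh) ^ 2 ≤ CB * Ns (u - Pu) * (c₁ + c₂) * N (Pu - uh) := by
    have A1 : ‖εh‖ * (c₁ * ‖Pu - uh‖) ≤ ‖εh‖ * N (Pu - uh) :=
      mul_le_mul_of_nonneg_left hnormle (norm_nonneg εh)
    have A2 : ‖εh‖ * N (Pu - uh) ≤ (CB * c₂ * Ns (u - Pu)) * N (Pu - uh) :=
      mul_le_mul_of_nonneg_right hεnorm (hN0 _)
    have A3 := mul_le_mul_of_nonneg_left step1 hc₁.le
    nlinarith [A1, A2, A3]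
  have hmid : N (Pu - uh) ≤ (CB / c) * (1 + c₂ / c₁) * Ns (u - Pu) := by
    rcases eq_or_lt_of_le (hN0 (Pu - uh)) with h | h
    · rw [← h]; positivity
    · have h7 : c₁ * c * N (Pu - uh) ≤ CB * Ns (u - Pu) * (c₁ + c₂) := by
        have hmul : (c₁ * c * N (Pu - uh)) * N (Pu - uh) ≤
            (CB * Ns (u - Pu) * (c₁ + c₂)) * N (Pu - uh) := by nlinarith [hquad]
        exact (mul_le_mul_iff_of_pos_right h).mp hmul
      have heqc : (CB / c) * (1 + c₂ / c₁) * Ns (u - Pu) * (c₁ * c)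
          = CB * Ns (u - Pu) * (c₁ + c₂) := by
        field_simp
      nlinarith [h7, heqc, mul_pos hc₁ hc]
  have htri : N (u - uh) ≤ N (u - Pu) + N (Pu - uh) := by
    rw [hdecomp]; exact hNtri _ _
  nlinarith
end
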